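/- For x > 0, the function q(x) := e^x/(−3e^x + 2e^{2x} + 1) is positive and satisfies x·q(x) → 1 as x → 0⁺; hence ∫₀¹ √(q(x)) dx converges. -/
import Mathlib


open Real MeasureTheory

noncomputable def qP (x : ℝ) : ℝ := exp x / (-3 * exp x + 2 * exp (2 * x) + 1)

lemma denom_eq (x : ℝ) :
    -3 * exp x + 2 * exp (2 * x) + 1 = (exp x - 1) * (2 * exp x - 1) := by
  rw [show (2:ℝ) * x = x + x from two_mul x, exp_add]; ring

lemma one_lt_exp_of_pos {x : ℝ} (hx : 0 < x) : 1 < exp x := by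
  calc (1:ℝ) = exp 0 := exp_zero.symm
  _ < exp x := exp_lt_exp.mpr hx

lemma denom_pos {x : ℝ} (hx : 0 < x) : 0 < -3 * exp x + 2 * exp (2 * x) + 1 := by
  rw [denom_eq]
  have h1 := one_lt_exp_of_pos hx
  nlinarith

lemma qP_pos {x : ℝ} (hx : 0 < x) : 0 < qP x :=
  div_pos (exp_pos x) (denom_pos hx)

lemma tendsto_qP : Filter.Tendsto (fun x => x * qP x) (nhdsWithin 0 (Set.Ioi 0)) (nhds 1) := by
  have h1 : Filter.Tendsto (fun x : ℝ => (exp x - 1) / x)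
      (nhdsWithin 0 (Set.Ioi 0)) (nhds 1) := by
    have h := (hasDerivAt_exp 0)
    rw [hasDerivAt_iff_tendsto_slope] at h
    have h' := h.mono_left (nhdsWithin_mono 0
      (fun y hy => ne_of_gt hy : Set.Ioi (0:ℝ) ⊆ {(0:ℝ)}ᶜ))
    rw [show (1:ℝ) = exp 0 from exp_zero.symm]
    exact h'.congr (fun x => by simp [slope_def_field, exp_zero])
  have h1' : Filter.Tendsto (fun x : ℝ => x / (exp x - 1))
      (nhdsWithin 0 (Set.Ioi 0)) (nhds 1) := by
    have := h1.inv₀ one_ne_zero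
    simpa [inv_div] using this
  have h2 : Filter.Tendsto (fun x : ℝ => exp x / (2 * exp x - 1))
      (nhdsWithin 0 (Set.Ioi 0)) (nhds 1) := by
    have hc : ContinuousAt (fun x : ℝ => exp x / (2 * exp x - 1)) 0 := by
      apply ContinuousAt.div
      · exact continuous_exp.continuousAt
      · fun_prop
      · norm_num [exp_zero]
    have := hc.tendsto.mono_left (nhdsWithin_le_nhds (s := Set.Ioi (0:ℝ)))
    convert this using 2
    norm_num [exp_zero]
  have := h1'.mul h2
  rw [one_mul] at this
  refine this.congr' ?_
  filter_upwards [self_mem_nhdsWithin] with x hx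
  have hx : (0:ℝ) < x := hx
  have he := one_lt_exp_of_pos hx
  have hne1 : exp x - 1 ≠ 0 := by linarith
  have hne2 : 2 * exp x - 1 ≠ 0 := by linarith
  rw [qP, denom_eq]
  field_simp

lemma integ_qP : IntegrableOn (fun x => Real.sqrt (qP x)) (Set.Ioo 0 1) := by
  have hmeas : Measurable (fun x => Real.sqrt (qP x)) := by
    apply Real.continuous_sqrt.measurable.comp
    unfold qP
    fun_prop
  have hg : IntegrableOn (fun x : ℝ => Real.sqrt (exp 1) * x ^ (-(1:ℝ)/2))
      (Set.Ioo 0 1) := by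
    rw [← intervalIntegrable_iff_integrableOn_Ioo_of_le (by norm_num : (0:ℝ) ≤ 1)]
    exact (intervalIntegral.intervalIntegrable_rpow' (by norm_num)).const_mul _
  refine hg.integrable.mono' hmeas.aestronglyMeasurable ?_
  rw [ae_restrict_iff' measurableSet_Ioo]
  refine Filter.Eventually.of_forall (fun x hx => ?_)
  obtain ⟨hx0, hx1⟩ := hx
  have he := one_lt_exp_of_pos hx0
  have hd : x ≤ (exp x - 1) * (2 * exp x - 1) := by
    have h1 : x + 1 ≤ exp x := add_one_le_exp x
    nlinarith
  have hq : qP x ≤ exp 1 / x := by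
    rw [qP, denom_eq]
    have hnum : exp x ≤ exp 1 := exp_le_exp.mpr hx1.le
    calc exp x / ((exp x - 1) * (2 * exp x - 1)) ≤ exp x / x := by
          gcongr
      _ ≤ exp 1 / x := by gcongr
  have hqn : 0 ≤ qP x := (qP_pos hx0).le
  rw [Real.norm_eq_abs, abs_of_nonneg (Real.sqrt_nonneg _)]
  calc Real.sqrt (qP x) ≤ Real.sqrt (exp 1 / x) := Real.sqrt_le_sqrt hq
    _ = Real.sqrt (exp 1) * x ^ (-(1:ℝ)/2) := by
        rw [Real.sqrt_div (exp_pos 1).le, neg_div, Real.rpow_neg hx0.le,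
          ← Real.sqrt_eq_rpow, div_eq_mul_inv]

theorem diagonal_pressure_norm_integrable :
    (∀ x > 0, 0 < qP x) ∧
    Filter.Tendsto (fun x => x * qP x) (nhdsWithin 0 (Set.Ioi 0)) (nhds 1) ∧
    IntegrableOn (fun x => Real.sqrt (qP x)) (Set.Ioo 0 1) := by
  exact ⟨fun x hx => qP_pos hx, tendsto_qP, integ_qP⟩
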